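/- Let f be a factor over a finite variable set S and g a factor over a finite variable set T, and let X be a subset of S with X ∩ T = ∅ (the variables X appear in f but not in g). Then summing out X from the product f·g equals the product of g with the result of summing out X from f; that is, ∑_X (f·g) = g · (∑_X f) as factors over (S ∪ T) \ X. -/

import Mathlib

/-- An instantiation of the variables in `S`, where variable `i` has value set `V i`. -/
abbrev Inst {ι : Type*} (V : ι → Type*) (S : Finset ι) : Type _ :=
  ∀ i : S, V i

/-- Restrict an instantiation of `T` to a subset `S ⊆ T`. -/
def Inst.restrict {ι : Type*} {V : ι → Type*} {S T : Finset ι} (h : S ⊆ T)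
    (z : Inst V T) : Inst V S :=
  fun i => z ⟨i, h i.2⟩

/-- Transport an instantiation along an equality of variable sets. -/
def Inst.cast {ι : Type*} {V : ι → Type*} {S T : Finset ι} (h : S = T)
    (z : Inst V S) : Inst V T :=
  fun i => z ⟨i, h.symm ▸ i.2⟩

/-- Extend an instantiation `u` of `U` with a value `x` for the variable `X`,
yielding an instantiation of `insert X U`. -/
def Inst.consX {ι : Type*} [DecidableEq ι] {V : ι → Type*} {U : Finset ι} (X : ι)
    (x : V X) (u : Inst V U) : Inst V (insert X U) :=
  fun i => if h : (i : ι) = X then _root_.cast (congrArg V h).symm x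
           else u ⟨i, (Finset.mem_insert.mp i.2).resolve_left h⟩

/-- Extend an instantiation `w` of `W \ {X}` with a value `x` for `X ∈ W`,
yielding an instantiation of `W`. -/
def Inst.extendAt {ι : Type*} [DecidableEq ι] {V : ι → Type*} {W : Finset ι} (X : ι)
    (_hX : X ∈ W) (x : V X) (w : Inst V (W \ {X})) : Inst V W :=
  fun i => if h : (i : ι) = X then _root_.cast (congrArg V h).symm x
           else w ⟨i, Finset.mem_sdiff.mpr ⟨i.2, Finset.notMem_singleton.mpr h⟩⟩

/-- The product of a factor over `S` and a factor over `T` is a factor over `S ∪ T`. -/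
def Factor.mul {ι : Type*} [DecidableEq ι] {V : ι → Type*} {S T : Finset ι}
    (f : Inst V S → ℝ) (g : Inst V T → ℝ) : Inst V (S ∪ T) → ℝ :=
  fun z => f (fun i => z ⟨i, Finset.mem_union_left _ i.2⟩) *
           g (fun i => z ⟨i, Finset.mem_union_right _ i.2⟩)

/-- Summing out the variables `Y ⊆ S` from a factor over `S` yields a factor over `S \ Y`. -/
noncomputable def Factor.sumOut {ι : Type*} [DecidableEq ι] {V : ι → Type*}
    [∀ i, Fintype (V i)] {S : Finset ι} (Y : Finset ι) (_hY : Y ⊆ S)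
    (f : Inst V S → ℝ) : Inst V (S \ Y) → ℝ :=
  fun z => ∑ y : Inst V Y, f fun i =>
    if h : (i : ι) ∈ Y then y ⟨i, h⟩ else z ⟨i, Finset.mem_sdiff.mpr ⟨i.2, h⟩⟩

/-- **Theorem 2 of the paper.** If the variables `X` appear in factor `f`
(over `S`) but not in factor `g` (over `T`), then `∑_X (f·g) = g · (∑_X f)`
as factors over `(S ∪ T) \ X`. -/
theorem sumOut_mul_of_not_mem {ι : Type*} [DecidableEq ι] (V : ι → Type*)
    [∀ i, Fintype (V i)]
    (S T X : Finset ι) (hXS : X ⊆ S) (hXT : X ∩ T = ∅)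
    (f : Inst V S → ℝ) (g : Inst V T → ℝ) :
    ∀ z : Inst V ((S ∪ T) \ X),
      Factor.sumOut X (hXS.trans Finset.subset_union_left) (Factor.mul f g) z
        = Factor.mul g (Factor.sumOut X hXS f)
            (Inst.cast
              (by
                have hd := Finset.disjoint_left.mp (Finset.disjoint_iff_inter_eq_empty.mpr hXT)
                ext a
                simp only [Finset.mem_sdiff, Finset.mem_union]
                constructor
                · rintro ⟨h1 | h2, h3⟩
                  · exact Or.inr ⟨h1, h3⟩
                  · exact Or.inl h2
                · rintro (h1 | ⟨h2, h3⟩)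
                  · exact ⟨Or.inr h1, fun hx => hd hx h1⟩
                  · exact ⟨Or.inl h2, h3⟩) z) := by
  intro z
  have hTX : ∀ ⦃i⦄, i ∈ T → i ∉ X :=
    Finset.disjoint_right.mp (Finset.disjoint_iff_inter_eq_empty.mpr hXT)
  simp only [Factor.sumOut, Factor.mul, Inst.cast, Finset.mul_sum]
  refine Finset.sum_congr rfl fun y _ => ?_
  rw [mul_comm]
  -- the argument of `g` reads only variables of `T`, none of which is summed out
  congr 2
  funext i
  simp [hTX i.2]
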